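/- arXiv:2111.03836 — 3 statements merged into one kernel-verified Lean document; each statement's English description precedes it below -/
import Mathlib

section
/- The function ω ↦ -D_u ω² + κ₂ - c - κ₄/(1 + D_w ω²), for D_u, D_w, κ₄ > 0 and real constants κ₂, c, attains its maximum over ω ∈ ℝ at ω² = (√(κ₄ D_u D_w) - D_u)/(D_u D_w), provided √(κ₄ D_u D_w) > D_u. -/
/-- The dispersion relation ω ↦ -D_u ω² + κ₂ - c - κ₄/(1 + D_w ω²) attains its
maximum at the critical wavenumber ω_c with ω_c² = (√(κ₄ D_u D_w) - D_u)/(D_u D_w),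
provided √(κ₄ D_u D_w) > D_u. -/
theorem dispersion_max_at_critical_wavenumber
    (Du Dw κ₄ κ₂ c : ℝ) (hDu : 0 < Du) (hDw : 0 < Dw) (hκ₄ : 0 < κ₄)
    (hcrit : Du < Real.sqrt (κ₄ * Du * Dw)) :
    ∀ ω : ℝ,
      -Du * ω ^ 2 + κ₂ - c - κ₄ / (1 + Dw * ω ^ 2) ≤
      -Du * (Real.sqrt ((Real.sqrt (κ₄ * Du * Dw) - Du) / (Du * Dw))) ^ 2 + κ₂ - c
        - κ₄ / (1 + Dw * (Real.sqrt ((Real.sqrt (κ₄ * Du * Dw) - Du) / (Du * Dw))) ^ 2) := by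
  intro ω
  set s := Real.sqrt (κ₄ * Du * Dw) with hs_def
  have hs0 : 0 < s := lt_trans hDu hcrit
  have hs2 : s ^ 2 = κ₄ * Du * Dw := Real.sq_sqrt (by positivity)
  have hxnn : 0 ≤ (s - Du) / (Du * Dw) := div_nonneg (by linarith) (by positivity)
  have hx : (Real.sqrt ((s - Du) / (Du * Dw))) ^ 2 = (s - Du) / (Du * Dw) :=
    Real.sq_sqrt hxnn
  rw [hx]
  have hA : 0 < 1 + Dw * ω ^ 2 := by positivity
  have hκeq : κ₄ = s ^ 2 / (Du * Dw) := by
    rw [hs2]; field_simp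
  have key : (-Du * ((s - Du) / (Du * Dw)) + κ₂ - c
        - κ₄ / (1 + Dw * ((s - Du) / (Du * Dw))))
      - (-Du * ω ^ 2 + κ₂ - c - κ₄ / (1 + Dw * ω ^ 2))
      = (s - Du * (1 + Dw * ω ^ 2)) ^ 2 / (Du * Dw * (1 + Dw * ω ^ 2)) := by
    have hB : 1 + Dw * ((s - Du) / (Du * Dw)) = s / Du := by
      field_simp; ring
    rw [hB, hκeq]
    field_simp
    ring
  have hnn : 0 ≤ (s - Du * (1 + Dw * ω ^ 2)) ^ 2 / (Du * Dw * (1 + Dw * ω ^ 2)) :=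
    div_nonneg (sq_nonneg _) (by positivity)
  linarith [key, hnn]
end

section
/- Let κ₃, C₁, C₂ > 0 and 1/κ₃ < τ < 2/κ₃, and let f : ℝ → ℝ be any function, ε ≠ 0. Then every equilibrium (p, α) of the system ṗ = κ₃α - (ε/C₁)f(p), α̇ = κ₃²(τ - 1/κ₃)α - κ₃(C₂/C₁)α³ - (ε/C₁)f(p) satisfies α = 0 and f(p) = 0. -/
/-- For 1/κ₃ < τ < 2/κ₃ and ε ≠ 0, every equilibrium of the reduced ODE system
ṗ = κ₃α - (ε/C₁)f(p), α̇ = κ₃²(τ-1/κ₃)α - κ₃(C₂/C₁)α³ - (ε/C₁)f(p)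
satisfies α = 0 and f(p) = 0. -/
theorem equilibria_on_axis
    (κ₃ C₁ C₂ τ ε : ℝ) (f : ℝ → ℝ)
    (hκ₃ : 0 < κ₃) (hC₁ : 0 < C₁) (hC₂ : 0 < C₂)
    (hτ₁ : 1 / κ₃ < τ) (hτ₂ : τ < 2 / κ₃) (hε : ε ≠ 0)
    (p α : ℝ)
    (h₁ : κ₃ * α - (ε / C₁) * f p = 0)
    (h₂ : κ₃ ^ 2 * (τ - 1 / κ₃) * α - κ₃ * (C₂ / C₁) * α ^ 3 - (ε / C₁) * f p = 0) :
    α = 0 ∧ f p = 0 := by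

  have hκ₃' : κ₃ ≠ 0 := ne_of_gt hκ₃
  have hτlt : κ₃ * τ < 2 := by
    have := (lt_div_iff₀ hκ₃).mp hτ₂
    linarith [this]
  have hfac : α * (κ₃ * (2 - κ₃ * τ) + κ₃ * (C₂ / C₁) * α ^ 2) = 0 := by
    have e : κ₃ ^ 2 * (1 / κ₃) = κ₃ := by field_simp
    linear_combination h₁ - h₂ - α * e
  have hα : α = 0 := by
    rcases mul_eq_zero.mp hfac with h | h
    · exact h
    · exfalso
      have hpos : 0 < κ₃ * (2 - κ₃ * τ) + κ₃ * (C₂ / C₁) * α ^ 2 := by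
        have h1 : 0 < κ₃ * (2 - κ₃ * τ) := by nlinarith
        have h2 : 0 ≤ κ₃ * (C₂ / C₁) * α ^ 2 := by positivity
        linarith
      linarith
  subst hα
  refine ⟨rfl, ?_⟩
  have : (ε / C₁) * f p = 0 := by linarith
  rcases mul_eq_zero.mp this with h | h
  · exact absurd h (div_ne_zero hε (ne_of_gt hC₁))
  · exact h
end

section
/- Let a < 0, b > 0, d > 0 with sin(bd/2) ≠ 0 or sinh(ad/2)cos(bd/2) ≠ 0. Then the function g(p) = e^{a(p-d/2)}cos(b(p-d/2)) - e^{a(p+d/2)}cos(b(p+d/2)) has infinitely many zeros on (d/2, ∞): there exists a strictly increasing unbounded sequence p_n → ∞ with g(p_n) = 0. -/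
open Filter

/-- The asymptotic heterogeneity term
g(p) = e^{a(p-d/2)}cos(b(p-d/2)) - e^{a(p+d/2)}cos(b(p+d/2)) has infinitely
many zeros on (d/2, ∞): there is a strictly increasing unbounded sequence of
zeros. -/
theorem infinitely_many_zeros
    (a b d : ℝ) (ha : a < 0) (hb : 0 < b) (hd : 0 < d)
    (hnd : Real.sin (b * d / 2) ≠ 0 ∨ Real.sinh (a * d / 2) * Real.cos (b * d / 2) ≠ 0) :
    ∃ P : ℕ → ℝ, StrictMono P ∧ Tendsto P atTop atTop ∧
      ∀ n : ℕ, d / 2 < P n ∧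
        Real.exp (a * (P n - d / 2)) * Real.cos (b * (P n - d / 2)) -
          Real.exp (a * (P n + d / 2)) * Real.cos (b * (P n + d / 2)) = 0 := by
  set h : ℝ → ℝ := fun p =>
    Real.exp (-(a * d / 2)) * Real.cos (b * p - b * d / 2) -
      Real.exp (a * d / 2) * Real.cos (b * p + b * d / 2) with hh
  have hfac : ∀ p : ℝ,
      Real.exp (a * (p - d / 2)) * Real.cos (b * (p - d / 2)) -
        Real.exp (a * (p + d / 2)) * Real.cos (b * (p + d / 2)) =
      Real.exp (a * p) * h p := by
    intro p
    simp only [hh]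
    rw [show a * (p - d / 2) = a * p + -(a * d / 2) by ring,
      show a * (p + d / 2) = a * p + a * d / 2 by ring,
      Real.exp_add, Real.exp_add,
      show b * (p - d / 2) = b * p - b * d / 2 by ring,
      show b * (p + d / 2) = b * p + b * d / 2 by ring]
    ring
  have hcont : Continuous h := by
    simp only [hh]
    fun_prop
  have hflip : ∀ p : ℝ, h (p + Real.pi / b) = -h p := by
    intro p
    have hb' : b ≠ 0 := ne_of_gt hb
    simp only [hh]
    rw [show b * (p + Real.pi / b) - b * d / 2 = (b * p - b * d / 2) + Real.pi by
        field_simp; ring,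
      show b * (p + Real.pi / b) + b * d / 2 = (b * p + b * d / 2) + Real.pi by
        field_simp; ring,
      Real.cos_add_pi, Real.cos_add_pi]
    ring
  -- a zero in every interval [x, x + π/b]
  have hzero : ∀ x : ℝ, ∃ p ∈ Set.Icc x (x + Real.pi / b), h p = 0 := by
    intro x
    have hx : x ≤ x + Real.pi / b := by
      have : 0 < Real.pi / b := div_pos Real.pi_pos hb
      linarith
    have h0 : (0 : ℝ) ∈ Set.uIcc (h x) (h (x + Real.pi / b)) := by
      rw [hflip x, Set.mem_uIcc]
      rcases le_total (h x) 0 with h1 | h1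
      · left; constructor <;> linarith
      · right; constructor <;> linarith
    have := intermediate_value_uIcc (a := x) (b := x + Real.pi / b)
      (f := h) (hcont.continuousOn)
    obtain ⟨p, hp, hp0⟩ := this h0
    rw [Set.uIcc_of_le hx] at hp
    exact ⟨p, hp, hp0⟩
  set x : ℕ → ℝ := fun n => d / 2 + 1 + n * (Real.pi / b + 1) with hx
  choose P hP hP0 using fun n => hzero (x n)
  have hpb : 0 < Real.pi / b := div_pos Real.pi_pos hb
  refine ⟨P, ?_, ?_, ?_⟩
  · apply strictMono_nat_of_lt_succ
    intro n
    have h1 : P n ≤ x n + Real.pi / b := (hP n).2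
    have h2 : x (n + 1) ≤ P (n + 1) := (hP (n + 1)).1
    have h3 : x n + Real.pi / b < x (n + 1) := by
      simp only [hx]
      push_cast
      nlinarith
    calc P n ≤ x n + Real.pi / b := h1
      _ < x (n + 1) := h3
      _ ≤ P (n + 1) := h2
  · apply tendsto_atTop_mono (f := fun n : ℕ => (n : ℝ))
    · intro n
      have h2 : x n ≤ P n := (hP n).1
      have : (n : ℝ) ≤ x n := by
        simp only [hx]
        nlinarith [show (0:ℝ) ≤ (n:ℝ) from Nat.cast_nonneg n]
      linarith
    · exact tendsto_natCast_atTop_atTop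
  · intro n
    have h2 : x n ≤ P n := (hP n).1
    have hxn : d / 2 < x n := by
      simp only [hx]
      nlinarith [show (0:ℝ) ≤ (n:ℝ) from Nat.cast_nonneg n]
    refine ⟨lt_of_lt_of_le hxn h2, ?_⟩
    rw [hfac, hP0 n, mul_zero]
end
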